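/- With notation as in the decoupling corollary, ω(Q̃) ≥ ω(Q̲); and if ω(Q̃) = 0 (the projected matrices D_{Q̃,i} are exactly jointly diagonalizable) then ω(Q̲) = 0 and f(Q̲, {Λ̲_i}) = f(Q̃, {Λ̃_i}). -/
import Mathlib


open Matrix

noncomputable def frobSq {m n : Type*} [Fintype m] [Fintype n]
    (X : Matrix m n ℝ) : ℝ := Matrix.trace (Xᵀ * X)

noncomputable def fObj {n k p : ℕ} (C : Fin p → Matrix (Fin n) (Fin n) ℝ)
    (Q : Matrix (Fin n) (Fin k) ℝ) (Λ : Fin p → Matrix (Fin k) (Fin k) ℝ) : ℝ :=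
  ∑ i, frobSq (C i * Q - Q * Λ i)

noncomputable def gammaObj {n k p : ℕ} (C : Fin p → Matrix (Fin n) (Fin n) ℝ)
    (Q : Matrix (Fin n) (Fin k) ℝ) : ℝ :=
  ∑ i, frobSq (C i * Q - Q * (Qᵀ * C i * Q))

noncomputable def omegaObj {n k p : ℕ} (C : Fin p → Matrix (Fin n) (Fin n) ℝ)
    (Q : Matrix (Fin n) (Fin k) ℝ) : ℝ :=
  ∑ i, frobSq ((Qᵀ * C i * Q) - Matrix.diagonal (fun j => (Qᵀ * C i * Q) j j))

lemma frobSq_eq_sum {m n : Type*} [Fintype m] [Fintype n] (X : Matrix m n ℝ) :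
    Matrix.trace (Xᵀ * X) = ∑ j, ∑ i, (X i j)^2 := by
  simp [Matrix.trace, Matrix.mul_apply, Matrix.diag, sq]

lemma frobSq_nonneg' {m n : Type*} [Fintype m] [Fintype n] (X : Matrix m n ℝ) :
    0 ≤ Matrix.trace (Xᵀ * X) := by
  rw [frobSq_eq_sum]; positivity

lemma frob_decomp {n k : ℕ} (C : Matrix (Fin n) (Fin n) ℝ) (hC : Cᵀ = C)
    (Q : Matrix (Fin n) (Fin k) ℝ) (hQ : Qᵀ * Q = 1)
    (Λ : Matrix (Fin k) (Fin k) ℝ) :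
    Matrix.trace ((C * Q - Q * Λ)ᵀ * (C * Q - Q * Λ)) =
      Matrix.trace ((C * Q - Q * (Qᵀ * C * Q))ᵀ * (C * Q - Q * (Qᵀ * C * Q))) +
      Matrix.trace ((Qᵀ * C * Q - Λ)ᵀ * (Qᵀ * C * Q - Λ)) := by
  set D := Qᵀ * C * Q with hD
  have hDt : Dᵀ = D := by
    rw [hD, transpose_mul, transpose_mul, transpose_transpose, hC, Matrix.mul_assoc]
  set A := C * Q - Q * D with hA
  set B := Q * (D - Λ) with hB
  have hAtQ : Aᵀ * Q = 0 := by
    rw [hA, transpose_sub, transpose_mul, transpose_mul, hC, Matrix.sub_mul, hDt,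
      Matrix.mul_assoc D Qᵀ Q, hQ, Matrix.mul_one, hD, sub_self]
  have hsplit : C * Q - Q * Λ = A + B := by
    rw [hA, hB, Matrix.mul_sub, sub_add_sub_cancel]
  have hAtB : Aᵀ * B = 0 := by
    rw [hB, ← Matrix.mul_assoc, hAtQ, Matrix.zero_mul]
  have hBtA : Bᵀ * A = 0 := by
    have := congrArg Matrix.transpose hAtB
    simpa using this
  have hBtB : Bᵀ * B = (D - Λ)ᵀ * (D - Λ) := by
    rw [hB, transpose_mul, Matrix.mul_assoc, ← Matrix.mul_assoc Qᵀ Q (D - Λ), hQ,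
      Matrix.one_mul]
  rw [hsplit, transpose_add, Matrix.add_mul, Matrix.mul_add, Matrix.mul_add,
    hAtB, hBtA, hBtB]
  simp [Matrix.trace_add]

lemma offdiag_le {k : ℕ} (D Λ : Matrix (Fin k) (Fin k) ℝ) (hΛ : Λ.IsDiag) :
    Matrix.trace ((D - Matrix.diagonal (fun j => D j j))ᵀ *
        (D - Matrix.diagonal (fun j => D j j))) ≤
      Matrix.trace ((D - Λ)ᵀ * (D - Λ)) := by
  rw [frobSq_eq_sum, frobSq_eq_sum]
  apply Finset.sum_le_sum; intro j _
  apply Finset.sum_le_sum; intro i _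
  by_cases h : i = j
  · subst h; simp [Matrix.diagonal]; positivity
  · rw [Matrix.sub_apply, Matrix.sub_apply, Matrix.diagonal_apply_ne _ h, hΛ h]


/-- `ω(Q̃) ≥ ω(Q̲)`, and if `ω(Q̃) = 0` then `ω(Q̲) = 0` and the two optimal
objective values coincide. -/
theorem omega_comparison {n k p : ℕ}
    (C : Fin p → Matrix (Fin n) (Fin n) ℝ) (hC : ∀ i, (C i).IsSymm)
    (Qt : Matrix (Fin n) (Fin k) ℝ) (hQt : Qtᵀ * Qt = 1)
    (hQtmin : ∀ Q : Matrix (Fin n) (Fin k) ℝ, Qᵀ * Q = 1 →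
      gammaObj C Qt ≤ gammaObj C Q)
    (Λt : Fin p → Matrix (Fin k) (Fin k) ℝ)
    (hΛt : ∀ i, Λt i = Matrix.diagonal (fun j => (Qtᵀ * C i * Qt) j j))
    (Qu : Matrix (Fin n) (Fin k) ℝ) (hQu : Quᵀ * Qu = 1)
    (Λu : Fin p → Matrix (Fin k) (Fin k) ℝ) (hΛu : ∀ i, (Λu i).IsDiag)
    (hQumin : ∀ (Q : Matrix (Fin n) (Fin k) ℝ)
        (Λ : Fin p → Matrix (Fin k) (Fin k) ℝ),
      Qᵀ * Q = 1 → (∀ i, (Λ i).IsDiag) → fObj C Qu Λu ≤ fObj C Q Λ) :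
    omegaObj C Qu ≤ omegaObj C Qt ∧
    (omegaObj C Qt = 0 →
      omegaObj C Qu = 0 ∧ fObj C Qu Λu = fObj C Qt Λt) := by
  have hCt : ∀ i, (C i)ᵀ = C i := fun i => hC i
  -- decomposition of fObj
  have hdec : ∀ (Q : Matrix (Fin n) (Fin k) ℝ), Qᵀ * Q = 1 →
      ∀ (Λ : Fin p → Matrix (Fin k) (Fin k) ℝ),
      fObj C Q Λ = gammaObj C Q + ∑ i, frobSq (Qᵀ * C i * Q - Λ i) := by
    intro Q hQ Λ
    unfold fObj gammaObj frobSq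
    rw [← Finset.sum_add_distrib]
    exact Finset.sum_congr rfl fun i _ => frob_decomp (C i) (hCt i) Q hQ (Λ i)
  have hΛtdiag : ∀ i, (Λt i).IsDiag := by
    intro i; rw [hΛt i]; exact Matrix.isDiag_diagonal _
  have hft : fObj C Qt Λt = gammaObj C Qt + omegaObj C Qt := by
    rw [hdec Qt hQt Λt]
    congr 1
    unfold omegaObj frobSq
    exact Finset.sum_congr rfl fun i _ => by rw [hΛt i]
  have hfu : fObj C Qu Λu = gammaObj C Qu + ∑ i, frobSq (Quᵀ * C i * Qu - Λu i) :=
    hdec Qu hQu Λu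
  have h3 : omegaObj C Qu ≤ ∑ i, frobSq (Quᵀ * C i * Qu - Λu i) := by
    unfold omegaObj frobSq
    exact Finset.sum_le_sum fun i _ => offdiag_le _ _ (hΛu i)
  have h4 : gammaObj C Qt ≤ gammaObj C Qu := hQtmin Qu hQu
  have h5 : fObj C Qu Λu ≤ fObj C Qt Λt := hQumin Qt Λt hQt hΛtdiag
  have homega_nonneg : 0 ≤ omegaObj C Qu := by
    unfold omegaObj frobSq
    exact Finset.sum_nonneg fun i _ => frobSq_nonneg' _
  constructor
  · linarith
  · intro h0
    constructor
    · linarith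
    · linarith
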